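/- arXiv:2312.04719 — 4 statements merged into one kernel-verified Lean document; each statement's English description precedes it below -/
import Mathlib

section
/- Let T ≥ 1 be an integer, λ ≥ 1 a real number, and a_1, …, a_T real numbers with 0 ≤ a_t ≤ 1 for every t. Then Σ_{t=1}^{T} a_t ≤ sqrt( 2 T λ · Σ_{t=1}^{T} ln(1 + a_t²/λ) ). -/
lemma aux_x_le_two_log {x : ℝ} (h0 : 0 ≤ x) (h1 : x ≤ 1) :
    x ≤ 2 * Real.log (1 + x) := by
  have hx2 : x / 2 ≤ Real.log (1 + x) := by
    rw [Real.le_log_iff_exp_le (by linarith)]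
    have h1' : 1 - x / 2 ≤ Real.exp (-(x / 2)) := by
      have := Real.add_one_le_exp (-(x / 2)); linarith
    have hpos : (0:ℝ) < 1 - x / 2 := by linarith
    have : Real.exp (x / 2) ≤ 1 / (1 - x / 2) := by
      rw [le_div_iff₀ hpos]
      calc Real.exp (x / 2) * (1 - x / 2)
          ≤ Real.exp (x / 2) * Real.exp (-(x / 2)) := by
            apply mul_le_mul_of_nonneg_left h1' (Real.exp_pos _).le
        _ = 1 := by rw [← Real.exp_add]; simp
    refine this.trans ?_
    rw [div_le_iff₀ hpos]
    nlinarith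
  linarith

theorem sum_le_sqrt_log_sum (T : ℕ) (hT : 1 ≤ T) (l : ℝ) (hl : 1 ≤ l)
    (a : ℕ → ℝ) (ha : ∀ t ∈ Finset.Icc 1 T, 0 ≤ a t ∧ a t ≤ 1) :
    ∑ t ∈ Finset.Icc 1 T, a t ≤
      Real.sqrt (2 * T * l * ∑ t ∈ Finset.Icc 1 T, Real.log (1 + (a t) ^ 2 / l)) := by
  have hl0 : (0:ℝ) < l := by linarith
  -- pointwise: a t ^2 ≤ 2 * l * log (1 + a t ^2 / l)
  have hpt : ∀ t ∈ Finset.Icc 1 T, (a t) ^ 2 ≤ 2 * l * Real.log (1 + (a t) ^ 2 / l) := by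
    intro t ht
    obtain ⟨h0, h1⟩ := ha t ht
    have hx0 : 0 ≤ (a t) ^ 2 / l := by positivity
    have hx1 : (a t) ^ 2 / l ≤ 1 := by
      rw [div_le_one hl0]; nlinarith
    have := aux_x_le_two_log hx0 hx1
    calc (a t) ^ 2 = l * ((a t) ^ 2 / l) := by field_simp
      _ ≤ l * (2 * Real.log (1 + (a t) ^ 2 / l)) := by
          apply mul_le_mul_of_nonneg_left this hl0.le
      _ = 2 * l * Real.log (1 + (a t) ^ 2 / l) := by ring
  have hsq : (∑ t ∈ Finset.Icc 1 T, a t) ^ 2 ≤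
      (T : ℝ) * ∑ t ∈ Finset.Icc 1 T, (a t) ^ 2 := by
    have := sq_sum_le_card_mul_sum_sq (s := Finset.Icc 1 T) (f := a)
    simpa [Nat.card_Icc] using this
  have hsum : ∑ t ∈ Finset.Icc 1 T, (a t) ^ 2 ≤
      2 * l * ∑ t ∈ Finset.Icc 1 T, Real.log (1 + (a t) ^ 2 / l) := by
    rw [Finset.mul_sum]
    exact Finset.sum_le_sum hpt
  have hnn : 0 ≤ ∑ t ∈ Finset.Icc 1 T, a t :=
    Finset.sum_nonneg fun t ht => (ha t ht).1
  rw [show (2 * (T:ℝ) * l * ∑ t ∈ Finset.Icc 1 T, Real.log (1 + (a t) ^ 2 / l)) =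
    (T:ℝ) * (2 * l * ∑ t ∈ Finset.Icc 1 T, Real.log (1 + (a t) ^ 2 / l)) by ring]
  have hle : (∑ t ∈ Finset.Icc 1 T, a t) ^ 2 ≤
      (T:ℝ) * (2 * l * ∑ t ∈ Finset.Icc 1 T, Real.log (1 + (a t) ^ 2 / l)) := by
    calc (∑ t ∈ Finset.Icc 1 T, a t) ^ 2 ≤ (T : ℝ) * ∑ t ∈ Finset.Icc 1 T, (a t) ^ 2 := hsq
    _ ≤ (T:ℝ) * (2 * l * ∑ t ∈ Finset.Icc 1 T, Real.log (1 + (a t) ^ 2 / l)) := by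
          apply mul_le_mul_of_nonneg_left hsum (by positivity)
  exact (Real.le_sqrt hnn ((sq_nonneg _).trans hle)).mpr hle
end

section
/- Let N ≥ 1 and T ≥ 1 be integers, λ ≥ 1 and γ ≥ 0 real numbers, and let σ : {1,…,N} × {1,…,N} × {1,…,T} → ℝ satisfy 0 ≤ σ(i,j,t) ≤ 1 for all i, j, t, and, for every pair (i,j), (1/2)·Σ_{t=1}^{T} ln(1 + σ(i,j,t)²/λ) ≤ γ. Then Σ_{t=1}^{T} Σ_{i=1}^{N} Σ_{j=1}^{N} σ(i,j,t) ≤ N²·sqrt(4 T λ γ). -/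
lemma half_le_log (u : ℝ) (h0 : 0 ≤ u) (h1 : u ≤ 1) : u / 2 ≤ Real.log (1 + u) := by
  have hpos : (0:ℝ) < 1 + u := by linarith
  have := Real.one_sub_inv_le_log_of_pos hpos
  have h2 : u / 2 ≤ 1 - (1 + u)⁻¹ := by
    have hinv : (1 + u)⁻¹ * (1 + u) = 1 := inv_mul_cancel₀ (ne_of_gt hpos)
    nlinarith [inv_nonneg.mpr hpos.le]
  linarith

theorem lemma2_deterministic (N T : ℕ) (hN : 1 ≤ N) (hT : 1 ≤ T)
    (l γ : ℝ) (hl : 1 ≤ l) (hγ : 0 ≤ γ)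
    (σ : ℕ → ℕ → ℕ → ℝ)
    (hσ : ∀ i ∈ Finset.Icc 1 N, ∀ j ∈ Finset.Icc 1 N, ∀ t ∈ Finset.Icc 1 T,
      0 ≤ σ i j t ∧ σ i j t ≤ 1)
    (hinfo : ∀ i ∈ Finset.Icc 1 N, ∀ j ∈ Finset.Icc 1 N,
      (1 / 2) * ∑ t ∈ Finset.Icc 1 T, Real.log (1 + (σ i j t) ^ 2 / l) ≤ γ) :
    ∑ t ∈ Finset.Icc 1 T, ∑ i ∈ Finset.Icc 1 N, ∑ j ∈ Finset.Icc 1 N, σ i j t ≤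
      (N : ℝ) ^ 2 * Real.sqrt (4 * T * l * γ) := by
  have hl0 : (0:ℝ) < l := by linarith
  -- key per-pair bound
  have key : ∀ i ∈ Finset.Icc 1 N, ∀ j ∈ Finset.Icc 1 N,
      ∑ t ∈ Finset.Icc 1 T, σ i j t ≤ Real.sqrt (4 * T * l * γ) := by
    intro i hi j hj
    have hsq : ∑ t ∈ Finset.Icc 1 T, (σ i j t) ^ 2 ≤ 4 * l * γ := by
      have hb : ∀ t ∈ Finset.Icc 1 T,
          (σ i j t) ^ 2 ≤ 2 * l * Real.log (1 + (σ i j t) ^ 2 / l) := by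
        intro t ht
        obtain ⟨h0, h1⟩ := hσ i hi j hj t ht
        have hu0 : 0 ≤ (σ i j t) ^ 2 / l := by positivity
        have hu1 : (σ i j t) ^ 2 / l ≤ 1 := by
          rw [div_le_one hl0]; nlinarith
        have := half_le_log _ hu0 hu1
        have hx : (σ i j t) ^ 2 / l / 2 ≤ Real.log (1 + (σ i j t) ^ 2 / l) := this
        calc (σ i j t) ^ 2 = 2 * l * ((σ i j t) ^ 2 / l / 2) := by field_simp
          _ ≤ 2 * l * Real.log (1 + (σ i j t) ^ 2 / l) := by
              apply mul_le_mul_of_nonneg_left hx; linarith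
      calc ∑ t ∈ Finset.Icc 1 T, (σ i j t) ^ 2
          ≤ ∑ t ∈ Finset.Icc 1 T, 2 * l * Real.log (1 + (σ i j t) ^ 2 / l) :=
            Finset.sum_le_sum hb
        _ = 4 * l * ((1/2) * ∑ t ∈ Finset.Icc 1 T, Real.log (1 + (σ i j t) ^ 2 / l)) := by
            rw [← Finset.mul_sum]; ring
        _ ≤ 4 * l * γ := by
            apply mul_le_mul_of_nonneg_left (hinfo i hi j hj); linarith
    have hcs : (∑ t ∈ Finset.Icc 1 T, σ i j t) ^ 2 ≤ 4 * T * l * γ := by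
      have := sq_sum_le_card_mul_sum_sq (s := Finset.Icc 1 T) (f := σ i j)
      have hcard : (Finset.Icc 1 T).card = T := by simp
      rw [hcard] at this
      calc (∑ t ∈ Finset.Icc 1 T, σ i j t) ^ 2
          ≤ (T:ℝ) * ∑ t ∈ Finset.Icc 1 T, (σ i j t) ^ 2 := this
        _ ≤ (T:ℝ) * (4 * l * γ) := by
            apply mul_le_mul_of_nonneg_left hsq; positivity
        _ = 4 * T * l * γ := by ring
    have hnn : 0 ≤ ∑ t ∈ Finset.Icc 1 T, σ i j t :=
      Finset.sum_nonneg fun t ht => (hσ i hi j hj t ht).1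
    calc ∑ t ∈ Finset.Icc 1 T, σ i j t
        = Real.sqrt ((∑ t ∈ Finset.Icc 1 T, σ i j t) ^ 2) := (Real.sqrt_sq hnn).symm
      _ ≤ Real.sqrt (4 * T * l * γ) := Real.sqrt_le_sqrt hcs
  rw [Finset.sum_comm]
  calc ∑ i ∈ Finset.Icc 1 N, ∑ t ∈ Finset.Icc 1 T, ∑ j ∈ Finset.Icc 1 N, σ i j t
      = ∑ i ∈ Finset.Icc 1 N, ∑ j ∈ Finset.Icc 1 N, ∑ t ∈ Finset.Icc 1 T, σ i j t := by
        refine Finset.sum_congr rfl fun i _ => Finset.sum_comm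
    _ ≤ ∑ i ∈ Finset.Icc 1 N, ∑ j ∈ Finset.Icc 1 N, Real.sqrt (4 * T * l * γ) := by
        refine Finset.sum_le_sum fun i hi => Finset.sum_le_sum fun j hj => key i hi j hj
    _ = (N:ℝ) ^ 2 * Real.sqrt (4 * T * l * γ) := by
        simp [Finset.sum_const]; ring
end

section
/- Let N ≥ 1, let P be a symmetric N×N real matrix having an orthonormal basis of eigenvectors u_1, …, u_N of ℝ^N with eigenvalues λ_1, …, λ_N such that u_1 = (1/√N)(1,…,1)ᵀ, λ_1 = 1, and |λ_p| ≤ r for all p ≥ 2, where 0 ≤ r < 1. Let B ≥ 0 and let Ψ_t (for t ∈ ℕ) be N×N real matrices with |(Ψ_t)_{ij}| ≤ B for all t, i, j. Then for every integer T ≥ 3, Σ_{t=3}^{T} Σ_{i=1}^{N} Σ_{j=1}^{N} ((P^{t−2})_{ij} − 1/N)·(Ψ_t)_{ij} ≤ N²(N−1)·B·r/(1−r). -/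
theorem perron_deviation_sum_bound (N : ℕ) (hN : 1 ≤ N)
    (P : Matrix (Fin N) (Fin N) ℝ) (hP : P.IsSymm)
    (u : Fin N → Fin N → ℝ) (lam : Fin N → ℝ)
    (horth : ∀ p q, (∑ i, u p i * u q i) = if p = q then 1 else 0)
    (heig : ∀ p, P.mulVec (u p) = lam p • u p)
    (p₀ : Fin N) (hu0 : u p₀ = fun _ => 1 / Real.sqrt N)
    (hl0 : lam p₀ = 1)
    (r : ℝ) (hr0 : 0 ≤ r) (hr1 : r < 1)
    (hlam : ∀ p, p ≠ p₀ → |lam p| ≤ r)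
    (B : ℝ) (hB : 0 ≤ B)
    (Ψ : ℕ → Matrix (Fin N) (Fin N) ℝ)
    (hΨ : ∀ t i j, |Ψ t i j| ≤ B)
    (T : ℕ) (hT : 3 ≤ T) :
    ∑ t ∈ Finset.Icc 3 T, ∑ i, ∑ j, ((P ^ (t - 2)) i j - 1 / (N : ℝ)) * Ψ t i j ≤
      (N : ℝ) ^ 2 * ((N : ℝ) - 1) * B * r / (1 - r) := by
  have hNpos : (0 : ℝ) < N := by exact_mod_cast Nat.lt_of_lt_of_le Nat.zero_lt_one hN
  -- U Uᵀ = 1 and Uᵀ U = 1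
  set U : Matrix (Fin N) (Fin N) ℝ := Matrix.of u with hU
  have hUUt : U * U.transpose = 1 := by
    ext p q
    simpa [Matrix.mul_apply, Matrix.one_apply, U] using horth p q
  have hUtU : U.transpose * U = 1 := mul_eq_one_comm.mp hUUt
  have hsumid : ∀ i j : Fin N, (∑ p, u p i * u p j) = if i = j then 1 else 0 := by
    intro i j
    have := congrFun (congrFun hUtU i) j
    simpa [Matrix.mul_apply, Matrix.one_apply, U, mul_comm] using this
  -- spectral decomposition of powers
  have hspec : ∀ k : ℕ, ∀ i j, (P ^ k) i j = ∑ p, lam p ^ k * (u p i * u p j) := by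
    intro k
    induction k with
    | zero =>
      intro i j
      simp [Matrix.one_apply, hsumid i j]
    | succ k ih =>
      intro i j
      rw [pow_succ']
      rw [Matrix.mul_apply]
      calc ∑ l, P i l * (P ^ k) l j
          = ∑ l, P i l * ∑ p, lam p ^ k * (u p l * u p j) := by
            simp only [ih]
        _ = ∑ p, lam p ^ k * ((∑ l, P i l * u p l) * u p j) := by
            simp only [Finset.mul_sum, Finset.sum_mul]
            rw [Finset.sum_comm]
            exact Finset.sum_congr rfl fun p _ => Finset.sum_congr rfl fun l _ => by ring
        _ = ∑ p, lam p ^ (k + 1) * (u p i * u p j) := by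
            congr 1; ext p
            have := congrFun (heig p) i
            simp only [Matrix.mulVec, dotProduct, Pi.smul_apply, smul_eq_mul] at this
            rw [this]; ring
  -- |u p i| ≤ 1
  have hub : ∀ p i, |u p i| ≤ 1 := by
    intro p i
    rw [abs_le_one_iff_mul_self_le_one]
    have h1 : u p i * u p i ≤ ∑ j, u p j * u p j :=
      Finset.single_le_sum (f := fun j => u p j * u p j) (fun j _ => mul_self_nonneg _) (Finset.mem_univ i)
    have h2 := horth p p
    simp at h2
    linarith
  -- deviation bound
  have hdev : ∀ k : ℕ, ∀ i j, |(P ^ k) i j - 1 / (N : ℝ)| ≤ ((N : ℝ) - 1) * r ^ k := by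
    intro k i j
    have hterm0 : lam p₀ ^ k * (u p₀ i * u p₀ j) = 1 / (N : ℝ) := by
      rw [hl0, hu0]
      simp only [one_pow, one_mul]
      rw [div_mul_div_comm, one_mul, Real.mul_self_sqrt (le_of_lt hNpos)]
    have hsplit : (P ^ k) i j - 1 / (N : ℝ)
        = ∑ p ∈ Finset.univ.erase p₀, lam p ^ k * (u p i * u p j) := by
      rw [hspec k i j, ← hterm0, ← Finset.add_sum_erase _ _ (Finset.mem_univ p₀)]
      ring
    rw [hsplit]
    calc |∑ p ∈ Finset.univ.erase p₀, lam p ^ k * (u p i * u p j)|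
        ≤ ∑ p ∈ Finset.univ.erase p₀, |lam p ^ k * (u p i * u p j)| :=
          Finset.abs_sum_le_sum_abs _ _
      _ ≤ ∑ p ∈ Finset.univ.erase p₀, r ^ k := by
          apply Finset.sum_le_sum
          intro p hp
          have hpne : p ≠ p₀ := Finset.ne_of_mem_erase hp
          rw [abs_mul, abs_mul, abs_pow]
          calc |lam p| ^ k * (|u p i| * |u p j|)
              ≤ r ^ k * (1 * 1) := by
                apply mul_le_mul
                · exact pow_le_pow_left₀ (abs_nonneg _) (hlam p hpne) k
                · exact mul_le_mul (hub p i) (hub p j) (abs_nonneg _) zero_le_one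
                · positivity
                · positivity
            _ = r ^ k := by ring
      _ = ((N : ℝ) - 1) * r ^ k := by
          rw [Finset.sum_const, Finset.card_erase_of_mem (Finset.mem_univ p₀),
            Finset.card_univ, Fintype.card_fin, nsmul_eq_mul, Nat.cast_sub hN,
            Nat.cast_one]
  -- per-t bound
  have hNm1 : (0 : ℝ) ≤ (N : ℝ) - 1 := by
    have : (1 : ℝ) ≤ N := by exact_mod_cast hN
    linarith
  have hinner : ∀ t ∈ Finset.Icc 3 T,
      ∑ i, ∑ j, ((P ^ (t - 2)) i j - 1 / (N : ℝ)) * Ψ t i j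
        ≤ (N : ℝ) ^ 2 * ((N : ℝ) - 1) * B * r ^ (t - 2) := by
    intro t _
    calc ∑ i, ∑ j, ((P ^ (t - 2)) i j - 1 / (N : ℝ)) * Ψ t i j
        ≤ ∑ i : Fin N, ∑ j : Fin N, ((N : ℝ) - 1) * r ^ (t - 2) * B := by
          apply Finset.sum_le_sum; intro i _
          apply Finset.sum_le_sum; intro j _
          calc ((P ^ (t - 2)) i j - 1 / (N : ℝ)) * Ψ t i j
              ≤ |((P ^ (t - 2)) i j - 1 / (N : ℝ)) * Ψ t i j| := le_abs_self _
            _ = |(P ^ (t - 2)) i j - 1 / (N : ℝ)| * |Ψ t i j| := abs_mul _ _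
            _ ≤ (((N : ℝ) - 1) * r ^ (t - 2)) * B := by
                apply mul_le_mul (hdev _ i j) (hΨ t i j) (abs_nonneg _)
                positivity
      _ = (N : ℝ) ^ 2 * ((N : ℝ) - 1) * B * r ^ (t - 2) := by
          simp [Finset.sum_const]
          ring
  have hgeo : ∑ t ∈ Finset.Icc 3 T, r ^ (t - 2) ≤ r / (1 - r) := by
    have h1 : Finset.Icc 3 T = Finset.Ico 3 (T + 1) := by
      rw [Finset.Ico_add_one_right_eq_Icc]
    rw [h1, Finset.sum_Ico_eq_sum_range]
    have h2 : ∀ k : ℕ, r ^ (3 + k - 2) = r * r ^ k := by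
      intro k
      have : 3 + k - 2 = k + 1 := by omega
      rw [this, pow_succ]; ring
    simp only [h2]
    rw [← Finset.mul_sum]
    rw [div_eq_mul_inv]
    apply mul_le_mul_of_nonneg_left _ hr0
    calc ∑ k ∈ Finset.range (T + 1 - 3), r ^ k
        ≤ ∑' k : ℕ, r ^ k :=
          Summable.sum_le_tsum _ (fun k _ => pow_nonneg hr0 k)
            (summable_geometric_of_lt_one hr0 hr1)
      _ = (1 - r)⁻¹ := tsum_geometric_of_lt_one hr0 hr1
  calc ∑ t ∈ Finset.Icc 3 T, ∑ i, ∑ j, ((P ^ (t - 2)) i j - 1 / (N : ℝ)) * Ψ t i j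
      ≤ ∑ t ∈ Finset.Icc 3 T, (N : ℝ) ^ 2 * ((N : ℝ) - 1) * B * r ^ (t - 2) :=
        Finset.sum_le_sum hinner
    _ = (N : ℝ) ^ 2 * ((N : ℝ) - 1) * B * ∑ t ∈ Finset.Icc 3 T, r ^ (t - 2) := by
        rw [Finset.mul_sum]
    _ ≤ (N : ℝ) ^ 2 * ((N : ℝ) - 1) * B * (r / (1 - r)) := by
        apply mul_le_mul_of_nonneg_left hgeo
        positivity
    _ = (N : ℝ) ^ 2 * ((N : ℝ) - 1) * B * r / (1 - r) := by ring
end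

section
/- Let N ≥ 2 and T ≥ 1 be integers and D a finite nonempty set. Let f_1, …, f_N : D → ℝ and B ≥ 0 with |f_i(x)| ≤ B for all i, x. Let P be the N×N real matrix all of whose entries equal 1/N. Let λ ≥ 1 and γ ≥ 0. Let β : ℕ → ℝ be nonnegative and nondecreasing on {1,…,T}. Let μ_{i,t}, σ_{i,t} : D → ℝ (for 1 ≤ i ≤ N, t ≥ 0) satisfy: (a) 0 ≤ σ_{i,t}(x) ≤ 1 for all i, t, x; (b) |μ_{i,t}(x) − f_i(x)| ≤ β_{t+1}·σ_{i,t}(x) for all i, x and all 0 ≤ t ≤ T−1; (c) for every i, every sequence z_1, z_2, … of points of D, and every 1 ≤ t ≤ T, (1/2)·Σ_{τ=1}^{t} ln(1 + σ_{i,τ}(z_τ)²/λ) ≤ γ and (1/2)·Σ_{τ=1}^{t} ln(1 + σ_{i,τ−1}(z_τ)²/λ) ≤ γ. Define μ̄_{i,t}, σ̄_{i,t} : D → ℝ by μ̄_{i,1} = μ_{i,1}, σ̄_{i,1} = σ_{i,1}, and for t ≥ 2 and every x: μ̄_{i,t}(x) = Σ_{j=1}^{N} P_{ij} μ̄_{j,t−1}(x)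 + μ_{i,t}(x) − μ_{i,t−1}(x) and σ̄_{i,t}(x) = Σ_{j=1}^{N} P_{ij} σ̄_{j,t−1}(x) + σ_{i,t}(x) − σ_{i,t−1}(x). Let x_{i,t} ∈ D (for 1 ≤ i ≤ N, 1 ≤ t ≤ T) be actions such that for every 3 ≤ t ≤ T, every i, and every y ∈ D, μ̄_{i,t−1}(x_{i,t}) + β_t σ̄_{i,t−1}(x_{i,t}) ≥ μ̄_{i,t−1}(y) + β_t σ̄_{i,t−1}(y). Then for every x⋆ ∈ D, writing F(x) = (1/N)Σ_{i=1}^{N} f_i(x), Σ_{t=1}^{T} ( F(x⋆) − (1/N)Σ_{j=1}^{N} F(x_{j,t}) ) ≤ 4 β_T · sqrt(4 T λ γ) + 4B. -/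
private lemma aux_log_ge {u : ℝ} (h0 : 0 ≤ u) (h1 : u ≤ 1) :
    u ≤ 3/2 * Real.log (1+u) := by
  have hc := strictConcaveOn_log_Ioi.concaveOn
  have h := hc.2 (Set.mem_Ioi.mpr (one_pos (α := ℝ))) (Set.mem_Ioi.mpr (two_pos (α := ℝ)))
    (show (0:ℝ) ≤ 1 - u by linarith) h0 (show (1-u) + u = 1 by ring)
  simp only [smul_eq_mul] at h
  rw [Real.log_one, show ((1:ℝ)-u) * 1 + u * 2 = 1 + u from by ring] at h
  have hl2 := Real.log_two_gt_d9
  nlinarith [h, hl2]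

set_option maxHeartbeats 2000000 in
theorem ma_igp_ucb_regret_complete_graph (N T : ℕ) (hN : 2 ≤ N) (hT : 1 ≤ T)
    (D : Type) [Fintype D] [Nonempty D]
    (f : Fin N → D → ℝ) (B : ℝ) (hB : 0 ≤ B)
    (hf : ∀ i x, |f i x| ≤ B)
    (P : Matrix (Fin N) (Fin N) ℝ)
    (hP : ∀ i j, P i j = 1 / (N : ℝ))
    (lamreg γ : ℝ) (hlamreg : 1 ≤ lamreg) (hγ : 0 ≤ γ)
    (β : ℕ → ℝ) (hβ0 : ∀ t, 0 ≤ β t)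
    (hβmono : ∀ s t, 1 ≤ s → s ≤ t → t ≤ T → β s ≤ β t)
    (μ σ : Fin N → ℕ → D → ℝ)
    (hσ : ∀ i t x, 0 ≤ σ i t x ∧ σ i t x ≤ 1)
    (hconf : ∀ i x t, t ≤ T - 1 → |μ i t x - f i x| ≤ β (t + 1) * σ i t x)
    (hinfo1 : ∀ (i : Fin N) (z : ℕ → D) (t : ℕ), 1 ≤ t → t ≤ T →
      (1 / 2) * ∑ τ ∈ Finset.Icc 1 t, Real.log (1 + (σ i τ (z τ)) ^ 2 / lamreg) ≤ γ)
    (hinfo2 : ∀ (i : Fin N) (z : ℕ → D) (t : ℕ), 1 ≤ t → t ≤ T →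
      (1 / 2) * ∑ τ ∈ Finset.Icc 1 t, Real.log (1 + (σ i (τ - 1) (z τ)) ^ 2 / lamreg) ≤ γ)
    (μb σb : Fin N → ℕ → D → ℝ)
    (hμb1 : ∀ i, μb i 1 = μ i 1) (hσb1 : ∀ i, σb i 1 = σ i 1)
    (hμbrec : ∀ i t x, 2 ≤ t →
      μb i t x = (∑ j, P i j * μb j (t - 1) x) + μ i t x - μ i (t - 1) x)
    (hσbrec : ∀ i t x, 2 ≤ t →
      σb i t x = (∑ j, P i j * σb j (t - 1) x) + σ i t x - σ i (t - 1) x)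
    (xa : Fin N → ℕ → D)
    (hact : ∀ t, 3 ≤ t → t ≤ T → ∀ (i : Fin N) (y : D),
      μb i (t - 1) y + β t * σb i (t - 1) y ≤
        μb i (t - 1) (xa i t) + β t * σb i (t - 1) (xa i t))
    (xstar : D) :
    ∑ t ∈ Finset.Icc 1 T,
        ((1 / (N : ℝ)) * ∑ i, f i xstar
          - (1 / (N : ℝ)) * ∑ j, (1 / (N : ℝ)) * ∑ i, f i (xa j t)) ≤
      4 * β T * Real.sqrt (4 * T * lamreg * γ) + 4 * B := by
  have hNR : (2:ℝ) ≤ (N:ℝ) := by exact_mod_cast hN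
  have hN0 : (0:ℝ) < (N:ℝ) := by linarith
  have hlam0 : (0:ℝ) < lamreg := lt_of_lt_of_le one_pos hlamreg
  have hc0 : (0:ℝ) ≤ 3*lamreg*γ := by
    have := mul_nonneg (mul_nonneg (by norm_num : (0:ℝ) ≤ 3) hlam0.le) hγ
    linarith
  set ν : ℝ := 1 / (N:ℝ) with hνdef
  have hν0 : 0 ≤ ν := by rw [hνdef]; positivity
  have hνN : ν * (N:ℝ) = 1 := by rw [hνdef]; exact one_div_mul_cancel hN0.ne'
  set m : ℝ := Real.sqrt (3*lamreg*γ) with hmdef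
  have hm0 : 0 ≤ m := Real.sqrt_nonneg _
  -- per-sample informativeness bound on σ²
  have hterm : ∀ (i : Fin N) (s : ℕ) (y : D),
      (σ i s y)^2 ≤ (3/2*lamreg) * Real.log (1 + (σ i s y)^2 / lamreg) := by
    intro i s y
    have h01 := hσ i s y
    have hu0 : 0 ≤ (σ i s y)^2 / lamreg := div_nonneg (sq_nonneg _) hlam0.le
    have hu1 : (σ i s y)^2 / lamreg ≤ 1 := by
      rw [div_le_one hlam0]; nlinarith [h01.1, h01.2]
    have hl := aux_log_ge hu0 hu1
    calc (σ i s y)^2 = lamreg * ((σ i s y)^2 / lamreg) := by field_simp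
      _ ≤ lamreg * (3/2 * Real.log (1 + (σ i s y)^2 / lamreg)) :=
          mul_le_mul_of_nonneg_left hl hlam0.le
      _ = (3/2*lamreg) * Real.log (1 + (σ i s y)^2 / lamreg) := by ring
  -- master information bound
  have master : ∀ (i : Fin N) (z : ℕ → D) (M : ℕ), 1 ≤ M → M ≤ T →
      ∑ s ∈ Finset.Icc 1 M, (σ i s (z s))^2 ≤ 3*lamreg*γ := by
    intro i z M h1 h2
    have hinfo := hinfo1 i z M h1 h2
    calc ∑ s ∈ Finset.Icc 1 M, (σ i s (z s))^2
        ≤ ∑ s ∈ Finset.Icc 1 M, (3/2*lamreg) * Real.log (1 + (σ i s (z s))^2 / lamreg) :=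
          Finset.sum_le_sum fun s _ => hterm i s (z s)
      _ = (3/2*lamreg) * ∑ s ∈ Finset.Icc 1 M, Real.log (1 + (σ i s (z s))^2 / lamreg) := by
          rw [Finset.mul_sum]
      _ ≤ (3/2*lamreg) * (2*γ) := by
          apply mul_le_mul_of_nonneg_left (by linarith) (by linarith)
      _ = 3*lamreg*γ := by ring
  -- single σ bound
  have msig : ∀ (i : Fin N) (s : ℕ) (y : D), 1 ≤ s → s ≤ T → σ i s y ≤ m := by
    intro i s y h1 h2
    have hM := master i (fun _ => y) s h1 h2
    have hmem : s ∈ Finset.Icc 1 s := Finset.mem_Icc.mpr ⟨h1, le_refl s⟩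
    have hsingle := Finset.single_le_sum (f := fun τ => (σ i τ y)^2)
        (fun τ _ => sq_nonneg _) hmem
    rw [hmdef]
    exact (Real.le_sqrt (hσ i s y).1 hc0).mpr (le_trans hsingle hM)
  -- chain bounds
  have chainsq : ∀ (i : Fin N) (v : ℕ → D) (n off : ℕ), 1 ≤ off → n + off ≤ T + 1 →
      ∑ k ∈ Finset.range n, (σ i (k+off) (v k))^2 ≤ 3*lamreg*γ := by
    intro i v n off hoff hno
    rcases Nat.eq_zero_or_pos n with h0 | hn
    · subst h0; simpa using hc0
    · have heq : ∑ k ∈ Finset.range n, (σ i (k+off) (v k))^2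
          = ∑ s ∈ Finset.Ico off (off+n), (σ i s (v (s-off)))^2 := by
        rw [Finset.sum_Ico_eq_sum_range, show off + n - off = n from by omega]
        exact Finset.sum_congr rfl fun k _ => by
          rw [show off + k - off = k from by omega, Nat.add_comm off k]
      rw [heq]
      have hsub : Finset.Ico off (off+n) ⊆ Finset.Icc 1 (off+n-1) := by
        intro s hs
        rw [Finset.mem_Ico] at hs
        rw [Finset.mem_Icc]
        omega
      calc ∑ s ∈ Finset.Ico off (off+n), (σ i s (v (s-off)))^2
          ≤ ∑ s ∈ Finset.Icc 1 (off+n-1), (σ i s (v (s-off)))^2 :=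
            Finset.sum_le_sum_of_subset_of_nonneg hsub (fun _ _ _ => sq_nonneg _)
        _ ≤ 3*lamreg*γ := master i (fun s => v (s-off)) (off+n-1) (by omega) (by omega)
  have chainS : ∀ (i : Fin N) (v : ℕ → D) (n off : ℕ), 1 ≤ off → n + off ≤ T + 1 →
      ∑ k ∈ Finset.range n, σ i (k+off) (v k) ≤ Real.sqrt ((n:ℝ) * (3*lamreg*γ)) := by
    intro i v n off hoff hno
    have hnn : 0 ≤ ∑ k ∈ Finset.range n, σ i (k+off) (v k) :=
      Finset.sum_nonneg fun k _ => (hσ _ _ _).1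
    have hcs := sq_sum_le_card_mul_sum_sq (s := Finset.range n)
        (f := fun k => σ i (k+off) (v k))
    rw [Finset.card_range] at hcs
    have hb := chainsq i v n off hoff hno
    have hsq : (∑ k ∈ Finset.range n, σ i (k+off) (v k))^2 ≤ (n:ℝ) * (3*lamreg*γ) :=
      le_trans hcs (mul_le_mul_of_nonneg_left hb (Nat.cast_nonneg n))
    exact (Real.le_sqrt hnn (mul_nonneg (Nat.cast_nonneg n) hc0)).mpr hsq
  -- averaging the P-weighted sums
  have hPsum : ∀ (w : Fin N → ℝ) (i : Fin N), ∑ j, P i j * w j = ν * ∑ j, w j := by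
    intro w i
    rw [Finset.mul_sum]
    exact Finset.sum_congr rfl fun j _ => by rw [hP i j, hνdef]
  -- consensus closed form
  have hclosed : ∀ (g gb : Fin N → ℕ → D → ℝ),
      (∀ i, gb i 1 = g i 1) →
      (∀ i t x, 2 ≤ t → gb i t x = (∑ j, P i j * gb j (t-1) x) + g i t x - g i (t-1) x) →
      ∀ (i : Fin N) (s : ℕ), 2 ≤ s → ∀ y,
        gb i s y = ν * (∑ j, g j (s-1) y) + g i s y - g i (s-1) y := by
    intro g gb h1 hrec
    have hsum : ∀ (s : ℕ), 1 ≤ s → ∀ y, ∑ j, gb j s y = ∑ j, g j s y := by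
      intro s hs
      induction s, hs using Nat.le_induction with
      | base => intro y; exact Finset.sum_congr rfl fun j _ => by rw [h1 j]
      | succ s hs ih =>
        intro y
        have hstep : ∀ i : Fin N, gb i (s+1) y
            = ν * (∑ j, gb j s y) + g i (s+1) y - g i s y := by
          intro i
          rw [hrec i (s+1) y (by omega)]
          simp only [Nat.add_sub_cancel]
          rw [hPsum]
        calc ∑ j, gb j (s+1) y
            = ∑ j, (ν * (∑ k, gb k s y) + g j (s+1) y - g j s y) :=
              Finset.sum_congr rfl fun j _ => hstep j
          _ = (N:ℝ) * (ν * ∑ k, gb k s y) + ∑ j, g j (s+1) y - ∑ j, g j s y := by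
              rw [Finset.sum_sub_distrib, Finset.sum_add_distrib, Finset.sum_const,
                Finset.card_univ, Fintype.card_fin, nsmul_eq_mul]
          _ = ∑ k, gb k s y + ∑ j, g j (s+1) y - ∑ j, g j s y := by
              rw [← mul_assoc, mul_comm (N:ℝ) ν, hνN, one_mul]
          _ = ∑ j, g j (s+1) y := by rw [ih y]; ring
    intro i s hs y
    rw [hrec i s y hs, hPsum, hsum (s-1) (by omega) y]
  have hμc : ∀ (i : Fin N) (s : ℕ), 2 ≤ s → ∀ y,
      μb i s y = ν * (∑ j, μ j (s-1) y) + μ i s y - μ i (s-1) y :=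
    hclosed μ μb hμb1 hμbrec
  have hσc : ∀ (i : Fin N) (s : ℕ), 2 ≤ s → ∀ y,
      σb i s y = ν * (∑ j, σ j (s-1) y) + σ i s y - σ i (s-1) y :=
    hclosed σ σb hσb1 hσbrec
  -- two-sided confidence
  have hconfLU : ∀ (i : Fin N) (y : D) (s : ℕ), s ≤ T - 1 →
      μ i s y ≤ f i y + β (s+1) * σ i s y ∧ f i y - β (s+1) * σ i s y ≤ μ i s y := by
    intro i y s hs
    have h := abs_le.mp (hconf i y s hs)
    constructor <;> [linarith [h.2]; linarith [h.1]]
  -- key per-round inequality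
  have key : ∀ (j : Fin N) (t : ℕ), 3 ≤ t → t ≤ T →
      ν * (∑ i, f i xstar) - ν * (∑ i, f i (xa j t)) ≤
        (μ j (t-2) xstar - μ j (t-1) xstar)
        + (β t * σ j (t-2) xstar - β t * σ j (t-1) xstar)
        + 2 * β T * (ν * (∑ i, σ i (t-2) (xa j t)) + σ j (t-1) (xa j t)) := by
    intro j t h3 htT
    have e1 : t - 1 - 1 = t - 2 := by omega
    have e2 : t - 2 + 1 = t - 1 := by omega
    have e3 : t - 1 + 1 = t := by omega
    have h2t1 : 2 ≤ t - 1 := by omega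
    have hkey0 := hact t h3 htT j xstar
    rw [hμc j (t-1) h2t1 xstar, hμc j (t-1) h2t1 (xa j t),
        hσc j (t-1) h2t1 xstar, hσc j (t-1) h2t1 (xa j t), e1] at hkey0
    have hβ1 : β (t-1) ≤ β t := hβmono (t-1) t (by omega) (by omega) htT
    have hβ2 : β t ≤ β T := hβmono t T (by omega) htT le_rfl
    have hc2 : ∀ (i : Fin N) (y : D), μ i (t-2) y ≤ f i y + β (t-1) * σ i (t-2) y
        ∧ f i y - β (t-1) * σ i (t-2) y ≤ μ i (t-2) y := by
      intro i y
      have h := hconfLU i y (t-2) (by omega)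
      rwa [e2] at h
    have hc1 : μ j (t-1) (xa j t) ≤ f j (xa j t) + β t * σ j (t-1) (xa j t) := by
      have h := (hconfLU j (xa j t) (t-1) (by omega)).1
      rwa [e3] at h
    have hA1 : ∑ i, f i xstar - β (t-1) * ∑ i, σ i (t-2) xstar ≤ ∑ i, μ i (t-2) xstar := by
      have h := Finset.sum_le_sum (s := Finset.univ)
        (f := fun i => f i xstar - β (t-1) * σ i (t-2) xstar)
        (g := fun i => μ i (t-2) xstar) (fun i _ => (hc2 i xstar).2)
      rw [Finset.sum_sub_distrib, ← Finset.mul_sum] at h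
      exact h
    have hA2 : ∑ i, μ i (t-2) (xa j t) ≤ ∑ i, f i (xa j t) + β (t-1) * ∑ i, σ i (t-2) (xa j t) := by
      have h := Finset.sum_le_sum (s := Finset.univ)
        (f := fun i => μ i (t-2) (xa j t))
        (g := fun i => f i (xa j t) + β (t-1) * σ i (t-2) (xa j t)) (fun i _ => (hc2 i (xa j t)).1)
      rw [Finset.sum_add_distrib, ← Finset.mul_sum] at h
      exact h
    have hA1' := mul_le_mul_of_nonneg_left hA1 hν0
    have hA2' := mul_le_mul_of_nonneg_left hA2 hν0
    have hS1 : 0 ≤ ∑ i, σ i (t-2) xstar := Finset.sum_nonneg fun i _ => (hσ _ _ _).1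
    have hS2 : 0 ≤ ∑ i, σ i (t-2) (xa j t) := Finset.sum_nonneg fun i _ => (hσ _ _ _).1
    have hb1 : 0 ≤ σ j (t-1) (xa j t) := (hσ _ _ _).1
    have hb2 : 0 ≤ σ j (t-2) (xa j t) := (hσ _ _ _).1
    have p1 : β (t-1) * (ν * ∑ i, σ i (t-2) xstar) ≤ β t * (ν * ∑ i, σ i (t-2) xstar) :=
      mul_le_mul_of_nonneg_right hβ1 (mul_nonneg hν0 hS1)
    have p2 : β (t-1) * (ν * ∑ i, σ i (t-2) (xa j t)) ≤ β T * (ν * ∑ i, σ i (t-2) (xa j t)) :=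
      mul_le_mul_of_nonneg_right (le_trans hβ1 hβ2) (mul_nonneg hν0 hS2)
    have p3 : β t * (ν * ∑ i, σ i (t-2) (xa j t)) ≤ β T * (ν * ∑ i, σ i (t-2) (xa j t)) :=
      mul_le_mul_of_nonneg_right hβ2 (mul_nonneg hν0 hS2)
    have p4 : β t * σ j (t-1) (xa j t) ≤ β T * σ j (t-1) (xa j t) :=
      mul_le_mul_of_nonneg_right hβ2 hb1
    have p5 : β (t-1) * σ j (t-2) (xa j t) ≤ β t * σ j (t-2) (xa j t) :=
      mul_le_mul_of_nonneg_right hβ1 hb2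
    have hcm := (hc2 j (xa j t)).2
    nlinarith [hkey0, hA1', hA2', hc1, hcm, p1, p2, p3, p4, p5]
  -- crude per-round bound
  have hFb : ∀ y : D, |ν * ∑ i, f i y| ≤ B := by
    intro y
    rw [abs_mul, abs_of_nonneg hν0]
    have h1 : |∑ i, f i y| ≤ ∑ i, |f i y| := Finset.abs_sum_le_sum_abs _ _
    have h2 : ∑ i, |f i y| ≤ (N:ℝ) * B := by
      calc ∑ i, |f i y| ≤ ∑ _i : Fin N, B := Finset.sum_le_sum fun i _ => hf i y
        _ = (N:ℝ) * B := by
            rw [Finset.sum_const, Finset.card_univ, Fintype.card_fin, nsmul_eq_mul]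
    calc ν * |∑ i, f i y| ≤ ν * ((N:ℝ) * B) :=
          mul_le_mul_of_nonneg_left (h1.trans h2) hν0
      _ = B := by rw [← mul_assoc, hνN, one_mul]
  have hterm2B : ∀ t : ℕ,
      ν * ∑ i, f i xstar - ν * ∑ j, ν * ∑ i, f i (xa j t) ≤ 2*B := by
    intro t
    have h1 : ν * ∑ i, f i xstar ≤ B := le_of_abs_le (hFb xstar)
    have h2 : -((N:ℝ)*B) ≤ ∑ j, ν * ∑ i, f i (xa j t) := by
      have hstep : ∀ j : Fin N, -B ≤ ν * ∑ i, f i (xa j t) :=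
        fun j => neg_le_of_abs_le (hFb (xa j t))
      calc -((N:ℝ)*B) = ∑ _j : Fin N, (-B) := by
            rw [Finset.sum_const, Finset.card_univ, Fintype.card_fin, nsmul_eq_mul]; ring
        _ ≤ ∑ j, ν * ∑ i, f i (xa j t) := Finset.sum_le_sum fun j _ => hstep j
    have h3 : -B ≤ ν * ∑ j, ν * ∑ i, f i (xa j t) := by
      have h := mul_le_mul_of_nonneg_left h2 hν0
      rw [mul_neg, ← mul_assoc, hνN, one_mul] at h
      linarith
    linarith
  have hRHS0 : 0 ≤ 4 * β T * Real.sqrt (4 * T * lamreg * γ) :=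
    mul_nonneg (mul_nonneg (by norm_num) (hβ0 T)) (Real.sqrt_nonneg _)
  rcases le_or_gt T 2 with hT2 | hT3
  · -- small horizon: trivial bound
    have hb : ∀ t ∈ Finset.Icc 1 T,
        ν * ∑ i, f i xstar - ν * ∑ j, ν * ∑ i, f i (xa j t) ≤ 2*B :=
      fun t _ => hterm2B t
    have h := Finset.sum_le_card_nsmul _ _ _ hb
    rw [Nat.card_Icc, nsmul_eq_mul] at h
    have hcard : ((T + 1 - 1 : ℕ) : ℝ) ≤ 2 := by
      have : T + 1 - 1 = T := by omega
      rw [this]; exact_mod_cast hT2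
    have hc2B : (0:ℝ) ≤ 2*B := by linarith
    have h2 : ((T + 1 - 1 : ℕ) : ℝ) * (2*B) ≤ 2 * (2*B) := mul_le_mul_of_nonneg_right hcard hc2B
    linarith [h, h2, hRHS0]
  · -- main case T ≥ 3
    set n := T - 2 with hndef
    have hn1 : 1 ≤ n := by omega
    set K : ℝ := Real.sqrt ((n:ℝ) * (3*lamreg*γ)) with hKdef
    have hK0 : 0 ≤ K := Real.sqrt_nonneg _
    have hIcc3 : ∀ (g : ℕ → ℝ), ∑ t ∈ Finset.Icc 3 T, g t = ∑ k ∈ Finset.range n, g (k+3) := by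
      intro g
      rw [show Finset.Icc 3 T = Finset.Ico 3 (T+1) from by
            ext a; simp [Finset.mem_Icc, Finset.mem_Ico, Nat.lt_succ_iff],
          Finset.sum_Ico_eq_sum_range, show T + 1 - 3 = n from by omega]
      exact Finset.sum_congr rfl fun k _ => by rw [Nat.add_comm 3 k]
    have hRj : ∀ j : Fin N,
        ∑ t ∈ Finset.Icc 3 T, (ν * (∑ i, f i xstar) - ν * (∑ i, f i (xa j t)))
          ≤ β T * (3*m + 4*K) := by
      intro j
      -- telescoping μ-part
      have hX : ∑ k ∈ Finset.range n, (μ j (k+3-2) xstar - μ j (k+3-1) xstar)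
          ≤ 2*(β T * m) := by
        have hre : ∑ k ∈ Finset.range n, (μ j (k+3-2) xstar - μ j (k+3-1) xstar)
            = ∑ k ∈ Finset.range n, (μ j (k+1) xstar - μ j (k+1+1) xstar) :=
          Finset.sum_congr rfl fun k _ => by
            rw [show k+3-2 = k+1 from by omega, show k+3-1 = k+1+1 from by omega]
        have htel := Finset.sum_range_sub' (fun l => μ j (l+1) xstar) n
        rw [hre, htel]
        rw [show (0:ℕ)+1 = 1 from rfl, show n+1 = T-1 from by omega]
        have h1 := (hconfLU j xstar 1 (by omega)).1
        have h2 := (hconfLU j xstar (T-1) (by omega)).2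
        rw [show T-1+1 = T from by omega] at h2
        have hm1 : σ j 1 xstar ≤ m := msig j 1 xstar (by omega) (by omega)
        have hm2 : σ j (T-1) xstar ≤ m := msig j (T-1) xstar (by omega) (by omega)
        have hβ2T : β 2 ≤ β T := hβmono 2 T (by omega) (by omega) le_rfl
        have q1 : β 2 * σ j 1 xstar ≤ β T * m := by
          calc β 2 * σ j 1 xstar ≤ β 2 * m := mul_le_mul_of_nonneg_left hm1 (hβ0 2)
            _ ≤ β T * m := mul_le_mul_of_nonneg_right hβ2T hm0
        have q2 : β T * σ j (T-1) xstar ≤ β T * m :=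
          mul_le_mul_of_nonneg_left hm2 (hβ0 T)
        linarith [h1, h2, q1, q2]
      -- Abel summation for the σ-part at xstar
      have habel : ∀ p : ℕ, p + 2 ≤ T →
          ∑ k ∈ Finset.range p, (β (k+3) * σ j (k+1) xstar - β (k+3) * σ j (k+2) xstar)
            ≤ β (p+2) * (m - σ j (p+1) xstar) := by
        intro p
        induction p with
        | zero =>
          intro _
          simp only [Finset.range_zero, Finset.sum_empty]
          have hm1 : σ j 1 xstar ≤ m := msig j 1 xstar (by omega) (by omega)
          exact mul_nonneg (hβ0 2) (by linarith)
        | succ p ih =>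
          intro hp
          rw [Finset.sum_range_succ]
          have hih := ih (by omega)
          have hmono : β (p+2) ≤ β (p+3) := hβmono (p+2) (p+3) (by omega) (by omega) (by omega)
          have hma : σ j (p+1) xstar ≤ m := msig j (p+1) xstar (by omega) (by omega)
          have hprod : β (p+2) * (m - σ j (p+1) xstar) ≤ β (p+3) * (m - σ j (p+1) xstar) :=
            mul_le_mul_of_nonneg_right hmono (by linarith)
          rw [show p+1+2 = p+3 from rfl, show p+1+1 = p+2 from rfl]
          nlinarith [hih, hprod]
      have hY : ∑ k ∈ Finset.range n,
          (β (k+3) * σ j (k+3-2) xstar - β (k+3) * σ j (k+3-1) xstar) ≤ β T * m := by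
        have hre : ∑ k ∈ Finset.range n,
            (β (k+3) * σ j (k+3-2) xstar - β (k+3) * σ j (k+3-1) xstar)
            = ∑ k ∈ Finset.range n, (β (k+3) * σ j (k+1) xstar - β (k+3) * σ j (k+2) xstar) :=
          Finset.sum_congr rfl fun k _ => by
            rw [show k+3-2 = k+1 from by omega, show k+3-1 = k+2 from by omega]
        rw [hre]
        have h := habel n (by omega)
        rw [show n+2 = T from by omega, show n+1 = T-1 from by omega] at h
        have ha0 : 0 ≤ σ j (T-1) xstar := (hσ _ _ _).1
        nlinarith [h, mul_nonneg (hβ0 T) ha0]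
      -- information-gain chains at played points
      have hZA : ∑ k ∈ Finset.range n, (ν * ∑ i, σ i (k+3-2) (xa j (k+3))) ≤ K := by
        calc ∑ k ∈ Finset.range n, (ν * ∑ i, σ i (k+3-2) (xa j (k+3)))
            = ν * ∑ k ∈ Finset.range n, ∑ i, σ i (k+1) (xa j (k+3)) := by
              rw [← Finset.mul_sum]
              congr 1
          _ = ν * ∑ i, ∑ k ∈ Finset.range n, σ i (k+1) (xa j (k+3)) := by
              rw [Finset.sum_comm]
          _ ≤ ν * ∑ _i : Fin N, K := by
              apply mul_le_mul_of_nonneg_left _ hν0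
              apply Finset.sum_le_sum
              intro i _
              exact chainS i (fun k => xa j (k+3)) n 1 le_rfl (by omega)
          _ = ν * ((N:ℝ) * K) := by
              rw [Finset.sum_const, Finset.card_univ, Fintype.card_fin, nsmul_eq_mul]
          _ = K := by rw [← mul_assoc, hνN, one_mul]
      have hZb : ∑ k ∈ Finset.range n, σ j (k+3-1) (xa j (k+3)) ≤ K := by
        have hre : ∑ k ∈ Finset.range n, σ j (k+3-1) (xa j (k+3))
            = ∑ k ∈ Finset.range n, σ j (k+2) (xa j (k+3)) :=
          Finset.sum_congr rfl fun k _ => by rw [show k+3-1 = k+2 from by omega]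
        rw [hre]
        exact chainS j (fun k => xa j (k+3)) n 2 (by omega) (by omega)
      calc ∑ t ∈ Finset.Icc 3 T, (ν * (∑ i, f i xstar) - ν * (∑ i, f i (xa j t)))
          ≤ ∑ t ∈ Finset.Icc 3 T, ((μ j (t-2) xstar - μ j (t-1) xstar)
              + (β t * σ j (t-2) xstar - β t * σ j (t-1) xstar)
              + 2 * β T * (ν * (∑ i, σ i (t-2) (xa j t)) + σ j (t-1) (xa j t))) :=
            Finset.sum_le_sum fun t ht => by
              have hmem := Finset.mem_Icc.mp ht
              exact key j t hmem.1 hmem.2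
        _ = (∑ k ∈ Finset.range n, (μ j (k+3-2) xstar - μ j (k+3-1) xstar))
            + (∑ k ∈ Finset.range n,
                (β (k+3) * σ j (k+3-2) xstar - β (k+3) * σ j (k+3-1) xstar))
            + (∑ k ∈ Finset.range n,
                2 * β T * (ν * (∑ i, σ i (k+3-2) (xa j (k+3))) + σ j (k+3-1) (xa j (k+3)))) := by
              rw [hIcc3]
              rw [Finset.sum_add_distrib, Finset.sum_add_distrib]
        _ ≤ 2*(β T * m) + β T * m + 2 * β T * (K + K) := by
              have h2βT : (0:ℝ) ≤ 2 * β T := by linarith [hβ0 T]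
              have hZ : ∑ k ∈ Finset.range n,
                  2 * β T * (ν * (∑ i, σ i (k+3-2) (xa j (k+3))) + σ j (k+3-1) (xa j (k+3)))
                    ≤ 2 * β T * (K + K) := by
                rw [← Finset.mul_sum]
                apply mul_le_mul_of_nonneg_left _ h2βT
                rw [Finset.sum_add_distrib]
                exact add_le_add hZA hZb
              exact add_le_add (add_le_add hX hY) hZ
        _ = β T * (3*m + 4*K) := by ring
    -- total over rounds
    have hsplit : Finset.Icc 1 T = Finset.Ioc 0 T := by
      ext a; simp [Finset.mem_Icc, Finset.mem_Ioc]; omega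
    have hIoc2 : Finset.Ioc 2 T = Finset.Icc 3 T := by
      ext a; simp [Finset.mem_Icc, Finset.mem_Ioc]; omega
    rw [hsplit, ← Finset.sum_Ioc_consecutive _ (show 0 ≤ 2 from by omega)
        (show 2 ≤ T from by omega)]
    have hpart1 : ∑ t ∈ Finset.Ioc 0 2,
        (ν * ∑ i, f i xstar - ν * ∑ j, ν * ∑ i, f i (xa j t)) ≤ 4*B := by
      have hb : ∀ t ∈ Finset.Ioc 0 2,
          ν * ∑ i, f i xstar - ν * ∑ j, ν * ∑ i, f i (xa j t) ≤ 2*B :=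
        fun t _ => hterm2B t
      have h := Finset.sum_le_card_nsmul _ _ _ hb
      rw [Nat.card_Ioc, nsmul_eq_mul] at h
      have : ((2 - 0 : ℕ) : ℝ) = 2 := by norm_num
      rw [this] at h
      linarith
    have hpart2 : ∑ t ∈ Finset.Ioc 2 T,
        (ν * ∑ i, f i xstar - ν * ∑ j, ν * ∑ i, f i (xa j t)) ≤ β T * (3*m + 4*K) := by
      rw [hIoc2]
      have hid : ∀ t : ℕ, ν * ∑ i, f i xstar - ν * ∑ j, ν * ∑ i, f i (xa j t)
          = ν * ∑ j, (ν * (∑ i, f i xstar) - ν * (∑ i, f i (xa j t))) := by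
        intro t
        rw [Finset.sum_sub_distrib, Finset.sum_const, Finset.card_univ, Fintype.card_fin,
          nsmul_eq_mul, mul_sub, ← mul_assoc ν (N:ℝ) _, hνN, one_mul]
      calc ∑ t ∈ Finset.Icc 3 T, (ν * ∑ i, f i xstar - ν * ∑ j, ν * ∑ i, f i (xa j t))
          = ∑ t ∈ Finset.Icc 3 T, ν * ∑ j, (ν * (∑ i, f i xstar) - ν * (∑ i, f i (xa j t))) :=
            Finset.sum_congr rfl fun t _ => hid t
        _ = ν * ∑ j, ∑ t ∈ Finset.Icc 3 T, (ν * (∑ i, f i xstar) - ν * (∑ i, f i (xa j t))) := by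
            rw [← Finset.mul_sum, Finset.sum_comm]
        _ ≤ ν * ∑ _j : Fin N, β T * (3*m + 4*K) :=
            mul_le_mul_of_nonneg_left (Finset.sum_le_sum fun j _ => hRj j) hν0
        _ = ν * ((N:ℝ) * (β T * (3*m + 4*K))) := by
            rw [Finset.sum_const, Finset.card_univ, Fintype.card_fin, nsmul_eq_mul]
        _ = β T * (3*m + 4*K) := by rw [← mul_assoc, hνN, one_mul]
    -- final arithmetic
    have hTr : (3:ℝ) ≤ (T:ℝ) := by exact_mod_cast hT3
    have hcast : ((n:ℕ):ℝ) = (T:ℝ) - 2 := by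
      rw [hndef, Nat.cast_sub (show 2 ≤ T from by omega)]
      norm_num
    have hd0 : 0 ≤ lamreg * γ := mul_nonneg hlam0.le hγ
    have hsd : 0 ≤ Real.sqrt (lamreg * γ) := Real.sqrt_nonneg _
    have hm_eq : m = Real.sqrt 3 * Real.sqrt (lamreg * γ) := by
      rw [hmdef, show 3*lamreg*γ = 3*(lamreg*γ) from by ring,
        Real.sqrt_mul (by norm_num) (lamreg*γ)]
    have hK_eq : K = Real.sqrt 3 * Real.sqrt ((T:ℝ)-2) * Real.sqrt (lamreg * γ) := by
      rw [hKdef, hcast, show ((T:ℝ)-2) * (3*lamreg*γ) = (3*((T:ℝ)-2))*(lamreg*γ) from by ring,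
        Real.sqrt_mul (by nlinarith) (lamreg*γ),
        Real.sqrt_mul (by norm_num) ((T:ℝ)-2)]
    have hR_eq : Real.sqrt (4*(T:ℝ)*lamreg*γ) = Real.sqrt (4*(T:ℝ)) * Real.sqrt (lamreg*γ) := by
      rw [show 4*(T:ℝ)*lamreg*γ = (4*(T:ℝ))*(lamreg*γ) from by ring,
        Real.sqrt_mul (by positivity) (lamreg*γ)]
    have hb0 : 0 ≤ Real.sqrt ((T:ℝ)-2) := Real.sqrt_nonneg _
    have hb2 : (Real.sqrt ((T:ℝ)-2))^2 = (T:ℝ)-2 := Real.sq_sqrt (by linarith)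
    have ha0 : 0 ≤ Real.sqrt 3 := Real.sqrt_nonneg _
    have ha2 : (Real.sqrt 3)^2 = 3 := Real.sq_sqrt (by norm_num)
    have hr0 : 0 ≤ Real.sqrt (4*(T:ℝ)) := Real.sqrt_nonneg _
    have hr2 : (Real.sqrt (4*(T:ℝ)))^2 = 4*(T:ℝ) := Real.sq_sqrt (by positivity)
    have hcoef : 3*Real.sqrt 3 + 4*(Real.sqrt 3 * Real.sqrt ((T:ℝ)-2)) ≤ 4*Real.sqrt (4*(T:ℝ)) := by
      have h1 : 0 ≤ 3*Real.sqrt 3 + 4*(Real.sqrt 3 * Real.sqrt ((T:ℝ)-2)) := by positivity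
      have hsq : (3*Real.sqrt 3 + 4*(Real.sqrt 3 * Real.sqrt ((T:ℝ)-2)))^2
          ≤ (4*Real.sqrt (4*(T:ℝ)))^2 := by
        have e : (3*Real.sqrt 3 + 4*(Real.sqrt 3 * Real.sqrt ((T:ℝ)-2)))^2
            = (Real.sqrt 3)^2 * (3+4*Real.sqrt ((T:ℝ)-2))^2 := by ring
        have e2 : (4*Real.sqrt (4*(T:ℝ)))^2 = 16*(Real.sqrt (4*(T:ℝ)))^2 := by ring
        rw [e, ha2, e2, hr2]
        nlinarith [sq_nonneg (4*Real.sqrt ((T:ℝ)-2) - 9), hb2, hb0]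
      calc 3*Real.sqrt 3 + 4*(Real.sqrt 3 * Real.sqrt ((T:ℝ)-2))
          = Real.sqrt ((3*Real.sqrt 3 + 4*(Real.sqrt 3 * Real.sqrt ((T:ℝ)-2)))^2) :=
            (Real.sqrt_sq h1).symm
        _ ≤ Real.sqrt ((4*Real.sqrt (4*(T:ℝ)))^2) := Real.sqrt_le_sqrt hsq
        _ = 4*Real.sqrt (4*(T:ℝ)) := Real.sqrt_sq (by positivity)
    have harith : 3*m + 4*K ≤ 4 * Real.sqrt (4*(T:ℝ)*lamreg*γ) := by
      have h := mul_le_mul_of_nonneg_right hcoef hsd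
      rw [hm_eq, hK_eq, hR_eq]
      nlinarith [h]
    have hfinal : β T * (3*m + 4*K) ≤ 4 * β T * Real.sqrt (4*(T:ℝ)*lamreg*γ) := by
      have h := mul_le_mul_of_nonneg_left harith (hβ0 T)
      nlinarith [h]
    linarith [hpart1, hpart2, hfinal]
end
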